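/- One-step SVRG-oracle bound (Lemma for the finite-sum setting). For i = 1,…,m and j = 1,…,n let f_{ij} : ℝ^{d_x} × ℝ^{d_y} → ℝ be differentiable with f_{ij}(·,y) convex and ∇_x f_{ij}(·,y) L_xx-Lipschitz, f_{ij}(x,·) concave and ∇_y f_{ij}(x,·) L_yy-Lipschitz, ∇_x f_{ij}(x,·) L_xy-Lipschitz in y and ∇_y f_{ij}(·,y) L_yx-Lipschitz in x; set f_i := (1/n)Σ_j f_{ij} and assume each f_i is μ_x-strongly convex in x and μ_y-strongly concave in y. Let p_{i1},…,p_{in} > 0 with Σ_j p_{ij} = 1 for each i and p_min := min_{i,j} p_{ij}. Fix a point z⋆ = (x⋆,y⋆), deterministic stacked iterates x_t ∈ ℝ^{md_x}, y_t ∈ ℝ^{md_y} with blocks z^i_t = (x^i_t, y^i_t), and deterministic reference points z̃^i_t = (x̃^i_t, ỹ^i_t). Independently for each node i sample an index l_i ∈ {1,…,n} with P(l_i = j) = p_{ij}, and define the SVRG gradients G^{i,x} := (1/(n p_{i l_i}))·(∇_x f_{i l_i}(z^i_t) − ∇_x f_{i l_i}(z̃^i_t)) + ∇_x f_i(z̃^i_t)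 and G^{i,y} := (1/(n p_{i l_i}))·(∇_y f_{i l_i}(z^i_t) − ∇_y f_{i l_i}(z̃^i_t)) + ∇_y f_i(z̃^i_t), with stacked vectors G^x, G^y. Then for every s > 0: E‖x_t − 𝟙x⋆ − sG^x + s∇_x F(𝟙x⋆,𝟙y⋆)‖² + E‖y_t − 𝟙y⋆ + sG^y − s∇_y F(𝟙x⋆,𝟙y⋆)‖² ≤ (1 − μ_x s + 4s²L_yx²/(np_min))·‖x_t − 𝟙x⋆‖² + (1 − μ_y s + 4s²L_xy²/(np_min))·‖y_t − 𝟙y⋆‖² − (2s − 8s²L_xx/(np_min))·Σᵢ V_{f_i,y^i_t}(x⋆,x^i_t) − (2s − 8s²L_yy/(np_min))·Σᵢ V_{−f_i,x^i_t}(y⋆,y^i_t) + (4s²(L_xx² + L_yx²)/(np_min))·‖x̃_t − 𝟙x⋆‖² + (4s²(L_yy² + L_xy²)/(np_min))·‖ỹ_t − 𝟙y⋆‖². -/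

import Mathlib

/-!
Fix a node `i` and let `q_l` be the SVRG direction minus `∇f_i(z⋆)`. Averaged over the law of
`l`, `q_l` is `∇f_i(z_t) - ∇f_i(z⋆)`, so the expectation of `‖x_t - x⋆ - s q_l‖²` is
`‖x_t - x⋆‖² - 2s ⟪x_t - x⋆, ∇ₓf_i(z_t) - ∇ₓf_i(z⋆)⟫ + s² E‖q_l‖²`. Strong convexity in `x`
bounds the inner product from below by `V_{f_i,y_t}(x⋆, x_t) + μ_x/2 ‖x_t - x⋆‖²` plus the mixed
term `f_i(x_t,y_t) - f_i(x⋆,y_t) - f_i(x_t,y⋆) + f_i(x⋆,y⋆)`. A variance is at most a second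
moment, so `E‖q_l‖²` is at most `2/(n p_min)` times the averages over `j` of
`‖∇ₓf_ij(z_t) - ∇ₓf_ij(z⋆)‖²` and `‖∇ₓf_ij(z̃_t) - ∇ₓf_ij(z⋆)‖²`, which cocoercivity of the
smooth convex `f_ij(·, y_t)` and the Lipschitz constants control. The `y`-block is the `x`-block
of `(y, x) ↦ -f_i(x, y)`, where the mixed term appears with the opposite sign, so it cancels in
the sum.
-/

open MeasureTheory RealInnerProductSpace Finset

section NormedGroup

variable {G : Type*} [NormedAddCommGroup G]

theorem norm_add_sq_le_two_mul (a b : G) : ‖a + b‖ ^ 2 ≤ 2 * ‖a‖ ^ 2 + 2 * ‖b‖ ^ 2 := by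
  nlinarith [norm_add_le a b, norm_nonneg (a + b), add_sq_le (a := ‖a‖) (b := ‖b‖)]

theorem norm_sub_sq_le_two_mul (a b c : G) :
    ‖a - c‖ ^ 2 ≤ 2 * ‖a - b‖ ^ 2 + 2 * ‖b - c‖ ^ 2 := by
  simpa using norm_add_sq_le_two_mul (a - b) (b - c)

theorem sq_norm_le_of_norm_le_mul {v : G} {L r : ℝ} (h : ‖v‖ ≤ L * r) :
    ‖v‖ ^ 2 ≤ L ^ 2 * r ^ 2 :=
  (pow_le_pow_left₀ (norm_nonneg v) h 2).trans_eq (mul_pow L r 2)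

end NormedGroup

section Sampling

theorem smul_one_div_mul_smul {K M : Type*} [Field K] [AddCommGroup M] [Module K M] {p : K}
    (hp : p ≠ 0) (c : K) (w : M) : p • ((1 / (c * p)) • w) = (1 / c) • w := by
  rw [smul_smul, one_div, one_div, mul_inv, mul_left_comm, mul_inv_cancel₀ hp, mul_one]

variable {E : Type*} [NormedAddCommGroup E] [InnerProductSpace ℝ E] {n : ℕ} {p : Fin n → ℝ}

theorem sum_mul_norm_sub_smul_sq (hp1 : ∑ j, p j = 1) (a : E) (s : ℝ) (q : Fin n → E) :
    ∑ j, p j * ‖a - s • q j‖ ^ 2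
      = ‖a‖ ^ 2 - 2 * s * ⟪a, ∑ j, p j • q j⟫ + s ^ 2 * ∑ j, p j * ‖q j‖ ^ 2 := by
  have h : ∀ j, p j * ‖a - s • q j‖ ^ 2
      = p j * ‖a‖ ^ 2 - 2 * s * ⟪a, p j • q j⟫ + s ^ 2 * (p j * ‖q j‖ ^ 2) := fun j => by
    rw [norm_sub_sq_real, real_inner_smul_right, real_inner_smul_right, norm_smul, mul_pow,
      Real.norm_eq_abs, sq_abs]
    ring
  rw [sum_congr rfl fun j _ => h j, sum_add_distrib, sum_sub_distrib, ← sum_mul, hp1,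
    ← mul_sum, ← mul_sum, ← inner_sum, one_mul]

theorem sum_mul_norm_sub_sum_smul_sq_le (hp1 : ∑ j, p j = 1) (B : Fin n → E) :
    ∑ j, p j * ‖B j - ∑ k, p k • B k‖ ^ 2 ≤ ∑ j, p j * ‖B j‖ ^ 2 := by
  have h := sum_mul_norm_sub_smul_sq hp1 (∑ k, p k • B k) 1 B
  simp only [one_smul, one_pow, one_mul, mul_one, real_inner_self_eq_norm_sq] at h
  simp_rw [norm_sub_rev (B _)]
  nlinarith [h, sq_nonneg ‖∑ k, p k • B k‖]

theorem mul_norm_one_div_mul_smul_sq_le (hn : n ≠ 0) {p pmin : ℝ} (hpmin : 0 < pmin)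
    (hle : pmin ≤ p) (w : E) :
    p * ‖(1 / (n * p)) • w‖ ^ 2 ≤ ‖w‖ ^ 2 / (n ^ 2 * pmin) := by
  have hp : 0 < p := hpmin.trans_le hle
  have hn' : (0 : ℝ) < n := by positivity
  rw [norm_smul, mul_pow, Real.norm_eq_abs, sq_abs, ← mul_assoc,
    show p * (1 / (n * p)) ^ 2 = 1 / (n ^ 2 * p) by field_simp, one_div_mul_eq_div]
  gcongr

theorem sum_mul_norm_sub_sub_sq_le (hp : ∀ j, 0 ≤ p j) (hp1 : ∑ j, p j = 1)
    (A B : Fin n → E) :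
    ∑ j, p j * ‖A j - (B j - ∑ k, p k • B k)‖ ^ 2
      ≤ 2 * ∑ j, p j * ‖A j‖ ^ 2 + 2 * ∑ j, p j * ‖B j‖ ^ 2 := by
  calc ∑ j, p j * ‖A j - (B j - ∑ k, p k • B k)‖ ^ 2
      ≤ ∑ j, (2 * (p j * ‖A j‖ ^ 2) + 2 * (p j * ‖B j - ∑ k, p k • B k‖ ^ 2)) := by
        gcongr with j
        have h := norm_add_sq_le_two_mul (A j) (-(B j - ∑ k, p k • B k))
        rw [norm_neg, ← sub_eq_add_neg] at h
        nlinarith [hp j]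
    _ ≤ 2 * ∑ j, p j * ‖A j‖ ^ 2 + 2 * ∑ j, p j * ‖B j‖ ^ 2 := by
        rw [sum_add_distrib, ← mul_sum, ← mul_sum]
        linarith [sum_mul_norm_sub_sum_smul_sq_le hp1 B]

theorem sum_mul_norm_svrg_step_sq_le (hp1 : ∑ j, p j = 1) {pmin : ℝ} (hpmin : 0 < pmin)
    (hle : ∀ j, pmin ≤ p j) (a : E) (s : ℝ) (g gr gs : Fin n → E) :
    ∑ j, p j * ‖a - s • ((1 / (n * p j)) • (g j - gr j) + (1 / (n : ℝ)) • ∑ k, gr k)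
        + s • ((1 / (n : ℝ)) • ∑ k, gs k)‖ ^ 2
      ≤ ‖a‖ ^ 2 - 2 * s * ⟪a, (1 / (n : ℝ)) • ∑ j, (g j - gs j)⟫
        + s ^ 2 * (2 / (n ^ 2 * pmin) * ∑ j, (‖g j - gs j‖ ^ 2 + ‖gr j - gs j‖ ^ 2)) := by
  have hn : n ≠ 0 := by rintro rfl; simp at hp1
  have hp : ∀ j, 0 < p j := fun j => hpmin.trans_le (hle j)
  set A : Fin n → E := fun j => (1 / (n * p j)) • (g j - gs j)
  set B : Fin n → E := fun j => (1 / (n * p j)) • (gr j - gs j)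
  have hweight : ∀ w : Fin n → E,
      ∑ j, p j • ((1 / (n * p j)) • w j) = (1 / (n : ℝ)) • ∑ j, w j := fun w => by
    simp only [smul_one_div_mul_smul (hp _).ne', ← smul_sum]
  have hstep : ∀ j, a - s • ((1 / (n * p j)) • (g j - gr j) + (1 / (n : ℝ)) • ∑ k, gr k)
      + s • ((1 / (n : ℝ)) • ∑ k, gs k) = a - s • (A j - (B j - ∑ k, p k • B k)) := fun j => by
    simp only [A, B, hweight, sum_sub_distrib]
    module
  have hmean :
      ∑ j, p j • (A j - (B j - ∑ k, p k • B k)) = (1 / (n : ℝ)) • ∑ j, (g j - gs j) := by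
    simp only [smul_sub, sum_sub_distrib, ← sum_smul, hp1, one_smul, sub_self, sub_zero]
    exact (hweight fun j => g j - gs j).trans (by rw [sum_sub_distrib, smul_sub])
  have hsecond : ∑ j, p j * ‖A j - (B j - ∑ k, p k • B k)‖ ^ 2
      ≤ 2 / (n ^ 2 * pmin) * ∑ j, (‖g j - gs j‖ ^ 2 + ‖gr j - gs j‖ ^ 2) := by
    refine (sum_mul_norm_sub_sub_sq_le (fun j => (hp j).le) hp1 A B).trans ?_
    rw [mul_sum, mul_sum, mul_sum, ← sum_add_distrib]
    refine sum_le_sum fun j _ => ?_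
    calc 2 * (p j * ‖A j‖ ^ 2) + 2 * (p j * ‖B j‖ ^ 2)
        ≤ 2 * (‖g j - gs j‖ ^ 2 / (n ^ 2 * pmin))
          + 2 * (‖gr j - gs j‖ ^ 2 / (n ^ 2 * pmin)) := by
          gcongr
          · exact mul_norm_one_div_mul_smul_sq_le hn hpmin (hle j) _
          · exact mul_norm_one_div_mul_smul_sq_le hn hpmin (hle j) _
      _ = 2 / (n ^ 2 * pmin) * (‖g j - gs j‖ ^ 2 + ‖gr j - gs j‖ ^ 2) := by ring
  simp only [hstep]
  rw [sum_mul_norm_sub_smul_sq hp1, hmean]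
  gcongr

end Sampling

section Smooth

variable {E : Type*} [NormedAddCommGroup E] [InnerProductSpace ℝ E] [CompleteSpace E]

/-- The paper's `V_{f,y}(x₁, x₂)` is `bregmanDiv (fun x => f x y) x₁ x₂`, and `V_{-f,x}(y₁, y₂)`
is `bregmanDiv (fun y => -f x y) y₁ y₂`. -/
noncomputable def bregmanDiv (f : E → ℝ) (x₁ x₂ : E) : ℝ :=
  f x₁ - f x₂ - ⟪gradient f x₂, x₁ - x₂⟫

theorem gradient_fun_neg (f : E → ℝ) (x : E) : gradient (fun z => -f z) x = -gradient f x := by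
  simp [gradient, fderiv_fun_neg]

theorem gradient_const_mul_sum {ι : Type*} (s : Finset ι) (c : ℝ) {g : ι → E → ℝ}
    (hg : ∀ j, Differentiable ℝ (g j)) (x : E) :
    gradient (fun z => c * ∑ j ∈ s, g j z) x = c • ∑ j ∈ s, gradient (g j) x := by
  rw [gradient, fderiv_const_mul (DifferentiableAt.fun_sum fun j _ => hg j x),
    fderiv_fun_sum fun j _ => hg j x]
  simp [gradient]

theorem bregmanDiv_const_mul_sum {ι : Type*} (s : Finset ι) (c : ℝ) {g : ι → E → ℝ}
    (hg : ∀ j, Differentiable ℝ (g j)) (x₁ x₂ : E) :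
    bregmanDiv (fun z => c * ∑ j ∈ s, g j z) x₁ x₂ = c * ∑ j ∈ s, bregmanDiv (g j) x₁ x₂ := by
  simp only [bregmanDiv, gradient_const_mul_sum s c hg, real_inner_smul_left, sum_inner,
    sum_sub_distrib]
  ring

theorem hasDerivAt_comp_add_smul {f : E → ℝ} (hf : Differentiable ℝ f) (x v : E) (t : ℝ) :
    HasDerivAt (fun t : ℝ => f (x + t • v)) ⟪gradient f (x + t • v), v⟫ t := by
  have hline : HasDerivAt (fun t : ℝ => x + t • v) v t := by
    simpa using ((hasDerivAt_id t).smul_const v).const_add x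
  simpa [Function.comp_def] using
    ((hf _).hasGradientAt.hasFDerivAt).comp_hasDerivAt t hline

theorem ConvexOn.bregmanDiv_nonneg {f : E → ℝ} (hc : ConvexOn ℝ Set.univ f)
    (hf : Differentiable ℝ f) (x y : E) : 0 ≤ bregmanDiv f y x := by
  have hline : ConvexOn ℝ Set.univ (fun t : ℝ => f (x + t • (y - x))) := by
    simpa [Function.comp_def, AffineMap.lineMap_apply_module', add_comm]
      using hc.comp_affineMap (AffineMap.lineMap x y)
  have := hline.le_slope_of_hasDerivAt (Set.mem_univ 0) (Set.mem_univ 1) one_pos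
    (by simpa only [zero_smul, add_zero] using hasDerivAt_comp_add_smul hf x (y - x) 0)
  simp only [slope_def_field, zero_smul, one_smul, add_zero, sub_zero, div_one,
    add_sub_cancel] at this
  simp only [bregmanDiv]
  linarith

theorem bregmanDiv_le_of_lipschitz_gradient {f : E → ℝ} (hf : Differentiable ℝ f) {L : ℝ}
    (hL : ∀ a b, ‖gradient f a - gradient f b‖ ≤ L * ‖a - b‖) (x y : E) :
    bregmanDiv f y x ≤ L / 2 * ‖y - x‖ ^ 2 := by
  set v := y - x
  let φ : ℝ → ℝ := fun t =>
    f (x + t • v) - t * ⟪gradient f x, v⟫ - L / 2 * t ^ 2 * ‖v‖ ^ 2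
  have hφ : ∀ t, HasDerivAt φ (⟪gradient f (x + t • v), v⟫ - ⟪gradient f x, v⟫
      - L * t * ‖v‖ ^ 2) t := by
    intro t
    refine (((hasDerivAt_comp_add_smul hf x v t).fun_sub
      ((hasDerivAt_id' t).mul_const ⟪gradient f x, v⟫)).fun_sub
      (((hasDerivAt_pow 2 t).const_mul (L / 2)).mul_const (‖v‖ ^ 2))).congr_deriv ?_
    simp only [Nat.cast_ofNat, Nat.add_one_sub_one, pow_one, one_mul]
    ring
  have hanti : AntitoneOn φ (Set.Ici 0) := by
    refine antitoneOn_of_deriv_nonpos (convex_Ici 0)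
      (fun t _ => (hφ t).continuousAt.continuousWithinAt)
      (fun t _ => (hφ t).differentiableAt.differentiableWithinAt) fun t ht => ?_
    rw [interior_Ici, Set.mem_Ioi] at ht
    have : ⟪gradient f (x + t • v) - gradient f x, v⟫ ≤ L * t * ‖v‖ ^ 2 :=
      calc ⟪gradient f (x + t • v) - gradient f x, v⟫
          ≤ ‖gradient f (x + t • v) - gradient f x‖ * ‖v‖ := real_inner_le_norm _ _
        _ ≤ L * ‖t • v‖ * ‖v‖ := by
            gcongr; simpa using hL (x + t • v) x
        _ = L * t * ‖v‖ ^ 2 := by rw [norm_smul, Real.norm_of_nonneg ht.le]; ring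
    rw [inner_sub_left] at this
    rw [(hφ t).deriv]
    linarith
  have := hanti Set.self_mem_Ici (zero_le_one' ℝ) zero_le_one
  norm_num [φ, v, -inner_gradient_left] at this
  simp only [bregmanDiv]
  linarith

theorem ConvexOn.norm_sub_gradient_sq_le {f : E → ℝ} (hc : ConvexOn ℝ Set.univ f)
    (hf : Differentiable ℝ f) {L : ℝ}
    (hL : ∀ a b, ‖gradient f a - gradient f b‖ ≤ L * ‖a - b‖) (a b : E) :
    ‖gradient f a - gradient f b‖ ^ 2 ≤ 2 * L * bregmanDiv f a b := by
  set g := gradient f a - gradient f b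
  have hB := hc.bregmanDiv_nonneg hf b a
  rcases le_or_gt L 0 with hL0 | hL0
  · have hg : ‖g‖ ≤ 0 := (hL a b).trans (mul_nonpos_of_nonpos_of_nonneg hL0 (norm_nonneg _))
    have hB' : bregmanDiv f a b ≤ 0 := (bregmanDiv_le_of_lipschitz_gradient hf hL b a).trans
      (mul_nonpos_of_nonpos_of_nonneg (by linarith) (sq_nonneg _))
    nlinarith [norm_nonneg g]
  -- The supporting hyperplane at `b` and the descent bound from `a`, both evaluated at
  -- `a - t • g`; the choice `t = L⁻¹` is optimal.
  have key : ∀ t : ℝ, t * ‖g‖ ^ 2 - L / 2 * t ^ 2 * ‖g‖ ^ 2 ≤ bregmanDiv f a b := by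
    intro t
    have h₁ := hc.bregmanDiv_nonneg hf b (a - t • g)
    have h₂ := bregmanDiv_le_of_lipschitz_gradient hf hL a (a - t • g)
    have hg2 : ‖g‖ ^ 2 = ⟪gradient f a, g⟫ - ⟪gradient f b, g⟫ := by
      rw [← inner_sub_left, real_inner_self_eq_norm_sq]
    simp only [bregmanDiv] at h₁ h₂ ⊢
    rw [show a - t • g - b = (a - b) - t • g by abel] at h₁
    simp only [sub_sub_cancel_left, norm_neg, norm_smul, mul_pow, Real.norm_eq_abs,
      sq_abs, inner_sub_right, inner_neg_right, real_inner_smul_right] at h₁ h₂ ⊢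
    linear_combination h₁ + h₂ + t * hg2
  have := key L⁻¹
  rw [show L⁻¹ * ‖g‖ ^ 2 - L / 2 * L⁻¹ ^ 2 * ‖g‖ ^ 2 = ‖g‖ ^ 2 / (2 * L) by
    field_simp; ring, div_le_iff₀ (by positivity)] at this
  linarith

theorem bregmanDiv_add_le_inner_sub_gradient {F : Type*} {f : E → F → ℝ} {μx : ℝ}
    (hsc : ∀ y x₁ x₂, f x₂ y + ⟪gradient (fun x => f x y) x₂, x₁ - x₂⟫
      + μx / 2 * ‖x₁ - x₂‖ ^ 2 ≤ f x₁ y) (xs xt : E) (ys yt : F) :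
    bregmanDiv (fun x => f x yt) xs xt + (f xt yt - f xs yt - f xt ys + f xs ys)
        + μx / 2 * ‖xt - xs‖ ^ 2
      ≤ ⟪xt - xs, gradient (fun x => f x yt) xt - gradient (fun x => f x ys) xs⟫ := by
  have hneg : ⟪xt - xs, gradient (fun x => f x yt) xt⟫
      = -⟪gradient (fun x => f x yt) xt, xs - xt⟫ := by
    rw [real_inner_comm, ← inner_neg_right, neg_sub]
  rw [inner_sub_right, hneg, real_inner_comm _ (xt - xs)]
  simp only [bregmanDiv]
  linarith [hsc ys xt xs]

end Smooth

section Expectation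

variable {Ω ι : Type*} [MeasurableSpace Ω] {μ : Measure Ω} [Fintype ι] [MeasurableSpace ι]
  [MeasurableSingletonClass ι] {X : Ω → ι}

theorem integrable_comp_of_finite [IsFiniteMeasure μ] (hX : Measurable X) (Φ : ι → ℝ) :
    Integrable (fun ω => Φ (X ω)) μ :=
  (Integrable.of_finite (μ := μ.map X)).comp_measurable hX

theorem integral_comp_eq_sum_of_law [IsFiniteMeasure μ] (hX : Measurable X) {p : ι → ℝ}
    (hp : ∀ j, 0 ≤ p j) (hlaw : ∀ j, μ {ω | X ω = j} = ENNReal.ofReal (p j)) (Φ : ι → ℝ) :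
    ∫ ω, Φ (X ω) ∂μ = ∑ j, p j * Φ j := by
  have hΦ : Integrable Φ (μ.map X) := .of_finite
  rw [← integral_map hX.aemeasurable hΦ.aestronglyMeasurable, integral_fintype hΦ]
  refine sum_congr rfl fun j _ => ?_
  rw [smul_eq_mul, measureReal_def, Measure.map_apply hX (measurableSet_singleton j)]
  simp only [Set.preimage, Set.mem_singleton_iff, hlaw, ENNReal.toReal_ofReal (hp j)]

end Expectation

section SVRGStep

variable {E F : Type*} [NormedAddCommGroup E] [InnerProductSpace ℝ E] [CompleteSpace E]
  [NormedAddCommGroup F] {Lxx Lxy : ℝ}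

theorem norm_sub_gradient_sq_le_bregmanDiv {h : E → F → ℝ}
    (hd : ∀ y, Differentiable ℝ (fun x => h x y)) (hc : ∀ y, ConvexOn ℝ Set.univ (fun x => h x y))
    (hLxx : ∀ y x₁ x₂, ‖gradient (fun x => h x y) x₁
      - gradient (fun x => h x y) x₂‖ ≤ Lxx * ‖x₁ - x₂‖)
    (hLxy : ∀ x y₁ y₂, ‖gradient (fun x' => h x' y₁) x
      - gradient (fun x' => h x' y₂) x‖ ≤ Lxy * ‖y₁ - y₂‖) (x₁ x₂ : E) (y₁ y₂ : F) :
    ‖gradient (fun x => h x y₁) x₁ - gradient (fun x => h x y₂) x₂‖ ^ 2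
      ≤ 4 * Lxx * bregmanDiv (fun x => h x y₁) x₂ x₁ + 2 * Lxy ^ 2 * ‖y₁ - y₂‖ ^ 2 := by
  have hco := (hc y₁).norm_sub_gradient_sq_le (hd y₁) (hLxx y₁) x₂ x₁
  rw [norm_sub_rev] at hco
  have := sq_norm_le_of_norm_le_mul (hLxy x₂ y₁ y₂)
  linarith [norm_sub_sq_le_two_mul (gradient (fun x => h x y₁) x₁)
    (gradient (fun x => h x y₁) x₂) (gradient (fun x => h x y₂) x₂)]

theorem norm_sub_gradient_sq_le_of_lipschitz {h : E → F → ℝ}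
    (hLxx : ∀ y x₁ x₂, ‖gradient (fun x => h x y) x₁
      - gradient (fun x => h x y) x₂‖ ≤ Lxx * ‖x₁ - x₂‖)
    (hLxy : ∀ x y₁ y₂, ‖gradient (fun x' => h x' y₁) x
      - gradient (fun x' => h x' y₂) x‖ ≤ Lxy * ‖y₁ - y₂‖) (x₁ x₂ : E) (y₁ y₂ : F) :
    ‖gradient (fun x => h x y₁) x₁ - gradient (fun x => h x y₂) x₂‖ ^ 2
      ≤ 2 * Lxx ^ 2 * ‖x₁ - x₂‖ ^ 2 + 2 * Lxy ^ 2 * ‖y₁ - y₂‖ ^ 2 := by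
  have h₁ := sq_norm_le_of_norm_le_mul (hLxx y₁ x₁ x₂)
  have h₂ := sq_norm_le_of_norm_le_mul (hLxy x₂ y₁ y₂)
  linarith [norm_sub_sq_le_two_mul (gradient (fun x => h x y₁) x₁)
    (gradient (fun x => h x y₁) x₂) (gradient (fun x => h x y₂) x₂)]

theorem sum_mul_norm_svrg_step_sq_le_of_convex {n : ℕ} {fj : Fin n → E → F → ℝ}
    {f : E → F → ℝ} (hdx : ∀ j y, Differentiable ℝ (fun x => fj j x y))
    (hconvx : ∀ j y, ConvexOn ℝ Set.univ (fun x => fj j x y))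
    (hLxx : ∀ j y x₁ x₂, ‖gradient (fun x => fj j x y) x₁
      - gradient (fun x => fj j x y) x₂‖ ≤ Lxx * ‖x₁ - x₂‖)
    (hLxy : ∀ j x y₁ y₂, ‖gradient (fun x' => fj j x' y₁) x
      - gradient (fun x' => fj j x' y₂) x‖ ≤ Lxy * ‖y₁ - y₂‖)
    (hf : ∀ x y, f x y = (1 / (n : ℝ)) * ∑ j, fj j x y) {μx : ℝ}
    (hsc : ∀ y x₁ x₂, f x₂ y + ⟪gradient (fun x => f x y) x₂, x₁ - x₂⟫
      + μx / 2 * ‖x₁ - x₂‖ ^ 2 ≤ f x₁ y)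
    {p : Fin n → ℝ} (hp1 : ∑ j, p j = 1) {pmin : ℝ} (hpmin : 0 < pmin)
    (hle : ∀ j, pmin ≤ p j) (xs xt xr : E) (ys yt yr : F) {s : ℝ} (hs : 0 ≤ s) :
    ∑ j, p j * ‖xt - xs
        - s • ((1 / ((n : ℝ) * p j)) •
            (gradient (fun x => fj j x yt) xt - gradient (fun x => fj j x yr) xr)
          + gradient (fun x => f x yr) xr)
        + s • gradient (fun x => f x ys) xs‖ ^ 2
      ≤ (1 - μx * s) * ‖xt - xs‖ ^ 2 - 2 * s * bregmanDiv (fun x => f x yt) xs xt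
        - 2 * s * (f xt yt - f xs yt - f xt ys + f xs ys)
        + s ^ 2 / (n * pmin) * (8 * Lxx * bregmanDiv (fun x => f x yt) xs xt
          + 4 * Lxy ^ 2 * ‖yt - ys‖ ^ 2 + 4 * Lxx ^ 2 * ‖xr - xs‖ ^ 2
          + 4 * Lxy ^ 2 * ‖yr - ys‖ ^ 2) := by
  have hn : (n : ℝ) ≠ 0 := Nat.cast_ne_zero.2 (by rintro rfl; simp at hp1)
  have hgrad : ∀ y z, gradient (fun x => f x y) z
      = (1 / (n : ℝ)) • ∑ j, gradient (fun x => fj j x y) z := fun y z => by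
    simp_rw [hf]
    exact gradient_const_mul_sum _ _ (fun j => hdx j y) z
  have hbreg : bregmanDiv (fun x => f x yt) xs xt
      = 1 / n * ∑ j, bregmanDiv (fun x => fj j x yt) xs xt := by
    simp_rw [hf]
    exact bregmanDiv_const_mul_sum _ _ (fun j => hdx j yt) xs xt
  have hcross := bregmanDiv_add_le_inner_sub_gradient hsc xs xt ys yt
  rw [hgrad, hgrad, ← smul_sub, ← sum_sub_distrib] at hcross
  have hsecond : ∑ j, (‖gradient (fun x => fj j x yt) xt - gradient (fun x => fj j x ys) xs‖ ^ 2
      + ‖gradient (fun x => fj j x yr) xr - gradient (fun x => fj j x ys) xs‖ ^ 2)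
      ≤ n * (4 * Lxx * bregmanDiv (fun x => f x yt) xs xt + 2 * Lxy ^ 2 * ‖yt - ys‖ ^ 2
        + 2 * Lxx ^ 2 * ‖xr - xs‖ ^ 2 + 2 * Lxy ^ 2 * ‖yr - ys‖ ^ 2) :=
    calc _ ≤ ∑ j, (4 * Lxx * bregmanDiv (fun x => fj j x yt) xs xt
          + 2 * Lxy ^ 2 * ‖yt - ys‖ ^ 2
          + (2 * Lxx ^ 2 * ‖xr - xs‖ ^ 2 + 2 * Lxy ^ 2 * ‖yr - ys‖ ^ 2)) :=
        sum_le_sum fun j _ => add_le_add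
          (norm_sub_gradient_sq_le_bregmanDiv (hdx j) (hconvx j) (hLxx j) (hLxy j) _ _ _ _)
          (norm_sub_gradient_sq_le_of_lipschitz (hLxx j) (hLxy j) _ _ _ _)
      _ = _ := by
        rw [hbreg]
        simp only [sum_add_distrib, ← mul_sum, sum_const, card_univ, Fintype.card_fin,
          nsmul_eq_mul]
        field_simp
        ring
  rw [hgrad yr xr, hgrad ys xs]
  calc _ ≤ _ := sum_mul_norm_svrg_step_sq_le hp1 hpmin hle _ s _ _ _
    _ ≤ ‖xt - xs‖ ^ 2
        - 2 * s * (bregmanDiv (fun x => f x yt) xs xt + (f xt yt - f xs yt - f xt ys + f xs ys)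
          + μx / 2 * ‖xt - xs‖ ^ 2)
        + s ^ 2 * (2 / (n ^ 2 * pmin) * (n * (4 * Lxx * bregmanDiv (fun x => f x yt) xs xt
          + 2 * Lxy ^ 2 * ‖yt - ys‖ ^ 2 + 2 * Lxx ^ 2 * ‖xr - xs‖ ^ 2
          + 2 * Lxy ^ 2 * ‖yr - ys‖ ^ 2))) := by
        gcongr
    _ = _ := by
        field_simp
        ring

end SVRGStep

section SVRGExpectation

variable {E F Ω : Type*} [NormedAddCommGroup E] [InnerProductSpace ℝ E] [CompleteSpace E]
  [NormedAddCommGroup F] [MeasurableSpace Ω] {μ : Measure Ω} [IsFiniteMeasure μ] {n : ℕ}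
  {X : Ω → Fin n} {p : Fin n → ℝ} {pmin : ℝ}

theorem integrable_and_integral_svrg_step_sq_le_of_convex (hX : Measurable X)
    (hlaw : ∀ j, μ {ω | X ω = j} = ENNReal.ofReal (p j)) {fj : Fin n → E → F → ℝ}
    {f : E → F → ℝ} (hdx : ∀ j y, Differentiable ℝ (fun x => fj j x y))
    (hconvx : ∀ j y, ConvexOn ℝ Set.univ (fun x => fj j x y)) {Lxx Lxy : ℝ}
    (hLxx : ∀ j y x₁ x₂, ‖gradient (fun x => fj j x y) x₁
      - gradient (fun x => fj j x y) x₂‖ ≤ Lxx * ‖x₁ - x₂‖)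
    (hLxy : ∀ j x y₁ y₂, ‖gradient (fun x' => fj j x' y₁) x
      - gradient (fun x' => fj j x' y₂) x‖ ≤ Lxy * ‖y₁ - y₂‖)
    (hf : ∀ x y, f x y = (1 / (n : ℝ)) * ∑ j, fj j x y) {μx : ℝ}
    (hsc : ∀ y x₁ x₂, f x₂ y + ⟪gradient (fun x => f x y) x₂, x₁ - x₂⟫
      + μx / 2 * ‖x₁ - x₂‖ ^ 2 ≤ f x₁ y)
    (hp1 : ∑ j, p j = 1) (hpmin : 0 < pmin) (hle : ∀ j, pmin ≤ p j)
    (xs xt xr : E) (ys yt yr : F) {s : ℝ} (hs : 0 ≤ s) :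
    Integrable (fun ω => ‖xt - xs
        - s • ((1 / ((n : ℝ) * p (X ω))) •
            (gradient (fun x => fj (X ω) x yt) xt - gradient (fun x => fj (X ω) x yr) xr)
          + gradient (fun x => f x yr) xr)
        + s • gradient (fun x => f x ys) xs‖ ^ 2) μ ∧
    ∫ ω, ‖xt - xs
        - s • ((1 / ((n : ℝ) * p (X ω))) •
            (gradient (fun x => fj (X ω) x yt) xt - gradient (fun x => fj (X ω) x yr) xr)
          + gradient (fun x => f x yr) xr)
        + s • gradient (fun x => f x ys) xs‖ ^ 2 ∂μ
      ≤ (1 - μx * s) * ‖xt - xs‖ ^ 2 - 2 * s * bregmanDiv (fun x => f x yt) xs xt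
        - 2 * s * (f xt yt - f xs yt - f xt ys + f xs ys)
        + s ^ 2 / (n * pmin) * (8 * Lxx * bregmanDiv (fun x => f x yt) xs xt
          + 4 * Lxy ^ 2 * ‖yt - ys‖ ^ 2 + 4 * Lxx ^ 2 * ‖xr - xs‖ ^ 2
          + 4 * Lxy ^ 2 * ‖yr - ys‖ ^ 2) := by
  let Φ : Fin n → ℝ := fun j => ‖xt - xs
    - s • ((1 / ((n : ℝ) * p j)) •
        (gradient (fun x => fj j x yt) xt - gradient (fun x => fj j x yr) xr)
      + gradient (fun x => f x yr) xr)
    + s • gradient (fun x => f x ys) xs‖ ^ 2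
  exact ⟨integrable_comp_of_finite hX Φ,
    (integral_comp_eq_sum_of_law hX (fun j => hpmin.le.trans (hle j)) hlaw Φ).trans_le
      (sum_mul_norm_svrg_step_sq_le_of_convex hdx hconvx hLxx hLxy hf hsc hp1 hpmin hle
        xs xt xr ys yt yr hs)⟩

theorem integrable_and_integral_svrg_step_sq_le_of_concave (hX : Measurable X)
    (hlaw : ∀ j, μ {ω | X ω = j} = ENNReal.ofReal (p j)) {fj : Fin n → F → E → ℝ}
    {f : F → E → ℝ} (hdy : ∀ j x, Differentiable ℝ (fun y => fj j x y))
    (hconcy : ∀ j x, ConcaveOn ℝ Set.univ (fun y => fj j x y)) {Lyy Lyx : ℝ}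
    (hLyy : ∀ j x y₁ y₂, ‖gradient (fun y => fj j x y) y₁
      - gradient (fun y => fj j x y) y₂‖ ≤ Lyy * ‖y₁ - y₂‖)
    (hLyx : ∀ j y x₁ x₂, ‖gradient (fun y' => fj j x₁ y') y
      - gradient (fun y' => fj j x₂ y') y‖ ≤ Lyx * ‖x₁ - x₂‖)
    (hf : ∀ x y, f x y = (1 / (n : ℝ)) * ∑ j, fj j x y) {μy : ℝ}
    (hscc : ∀ x y₁ y₂, f x y₁ ≤ f x y₂ + ⟪gradient (fun y => f x y) y₂, y₁ - y₂⟫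
      - μy / 2 * ‖y₁ - y₂‖ ^ 2)
    (hp1 : ∑ j, p j = 1) (hpmin : 0 < pmin) (hle : ∀ j, pmin ≤ p j)
    (xs xt xr : F) (ys yt yr : E) {s : ℝ} (hs : 0 ≤ s) :
    Integrable (fun ω => ‖yt - ys
        + s • ((1 / ((n : ℝ) * p (X ω))) •
            (gradient (fun y => fj (X ω) xt y) yt - gradient (fun y => fj (X ω) xr y) yr)
          + gradient (fun y => f xr y) yr)
        - s • gradient (fun y => f xs y) ys‖ ^ 2) μ ∧
    ∫ ω, ‖yt - ys
        + s • ((1 / ((n : ℝ) * p (X ω))) •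
            (gradient (fun y => fj (X ω) xt y) yt - gradient (fun y => fj (X ω) xr y) yr)
          + gradient (fun y => f xr y) yr)
        - s • gradient (fun y => f xs y) ys‖ ^ 2 ∂μ
      ≤ (1 - μy * s) * ‖yt - ys‖ ^ 2 - 2 * s * bregmanDiv (fun y => -f xt y) ys yt
        + 2 * s * (f xt yt - f xs yt - f xt ys + f xs ys)
        + s ^ 2 / (n * pmin) * (8 * Lyy * bregmanDiv (fun y => -f xt y) ys yt
          + 4 * Lyx ^ 2 * ‖xt - xs‖ ^ 2 + 4 * Lyy ^ 2 * ‖yr - ys‖ ^ 2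
          + 4 * Lyx ^ 2 * ‖xr - xs‖ ^ 2) := by
  have h := integrable_and_integral_svrg_step_sq_le_of_convex hX hlaw (fj := fun j y x => -fj j x y)
    (f := fun y x => -f x y) (Lxx := Lyy) (Lxy := Lyx) (μx := μy)
    (fun j x => (hdy j x).neg) (fun j x => (hconcy j x).neg)
    (fun j x y₁ y₂ => by
      simp only [gradient_fun_neg, neg_sub_neg]
      rw [norm_sub_rev]
      exact hLyy j x y₁ y₂)
    (fun j y x₁ x₂ => by
      simp only [gradient_fun_neg, neg_sub_neg]
      rw [norm_sub_rev]
      exact hLyx j y x₁ x₂)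
    (fun y x => by simp [hf, sum_neg_distrib])
    (fun x y₁ y₂ => by
      simp only [gradient_fun_neg, inner_neg_left]
      linarith [hscc x y₁ y₂])
    hp1 hpmin hle ys yt yr xs xt xr hs
  simp only [gradient_fun_neg] at h
  convert h using 6
  · module
  · module
  · ring

end SVRGExpectation

theorem one_step_svrg_oracle_bound_general {dx dy m n : ℕ}
    {Ω : Type*} [MeasurableSpace Ω] (μP : Measure Ω) [IsProbabilityMeasure μP]
    (fij : Fin m → Fin n → EuclideanSpace ℝ (Fin dx) → EuclideanSpace ℝ (Fin dy) → ℝ)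
    (hdx : ∀ i j y, Differentiable ℝ (fun x => fij i j x y))
    (hdy : ∀ i j x, Differentiable ℝ (fun y => fij i j x y))
    (hconvx : ∀ i j y, ConvexOn ℝ Set.univ (fun x => fij i j x y))
    (hconcy : ∀ i j x, ConcaveOn ℝ Set.univ (fun y => fij i j x y))
    (Lxx Lyy Lxy Lyx : ℝ)
    (hLxx : ∀ i j y x₁ x₂, ‖gradient (fun x => fij i j x y) x₁
        - gradient (fun x => fij i j x y) x₂‖ ≤ Lxx * ‖x₁ - x₂‖)
    (hLyy : ∀ i j x y₁ y₂, ‖gradient (fun y => fij i j x y) y₁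
        - gradient (fun y => fij i j x y) y₂‖ ≤ Lyy * ‖y₁ - y₂‖)
    (hLxy : ∀ i j x y₁ y₂, ‖gradient (fun x' => fij i j x' y₁) x
        - gradient (fun x' => fij i j x' y₂) x‖ ≤ Lxy * ‖y₁ - y₂‖)
    (hLyx : ∀ i j y x₁ x₂, ‖gradient (fun y' => fij i j x₁ y') y
        - gradient (fun y' => fij i j x₂ y') y‖ ≤ Lyx * ‖x₁ - x₂‖)
    (fi : Fin m → EuclideanSpace ℝ (Fin dx) → EuclideanSpace ℝ (Fin dy) → ℝ)
    (hfi : ∀ i x y, fi i x y = (1 / (n : ℝ)) * ∑ j, fij i j x y)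
    (μx μy : ℝ)
    (hsc : ∀ i y x₁ x₂, fi i x₂ y + ⟪gradient (fun x => fi i x y) x₂, x₁ - x₂⟫
        + μx / 2 * ‖x₁ - x₂‖ ^ 2 ≤ fi i x₁ y)
    (hscc : ∀ i x y₁ y₂, fi i x y₁ ≤ fi i x y₂ + ⟪gradient (fun y => fi i x y) y₂, y₁ - y₂⟫
        - μy / 2 * ‖y₁ - y₂‖ ^ 2)
    -- sampling probabilities
    (p : Fin m → Fin n → ℝ) (hp : ∀ i j, 0 < p i j) (hp1 : ∀ i, ∑ j, p i j = 1)
    (pmin : ℝ) (hpmin : IsLeast {t : ℝ | ∃ i j, p i j = t} pmin)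
    -- the fixed point `z⋆`, the iterates and the reference points
    (xs : EuclideanSpace ℝ (Fin dx)) (ys : EuclideanSpace ℝ (Fin dy))
    (xt xr : Fin m → EuclideanSpace ℝ (Fin dx)) (yt yr : Fin m → EuclideanSpace ℝ (Fin dy))
    -- the independently sampled indices
    (l : Fin m → Ω → Fin n) (hlmeas : ∀ i, Measurable (l i))
    (hllaw : ∀ i j, μP {ω | l i ω = j} = ENNReal.ofReal (p i j))
    (s : ℝ) (hs : 0 < s) :
    (∫ ω, ∑ i, ‖xt i - xs
          - s • ((1 / ((n : ℝ) * p i (l i ω))) •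
                (gradient (fun x => fij i (l i ω) x (yt i)) (xt i)
                  - gradient (fun x => fij i (l i ω) x (yr i)) (xr i))
              + gradient (fun x => fi i x (yr i)) (xr i))
          + s • gradient (fun x => fi i x ys) xs‖ ^ 2 ∂μP)
      + (∫ ω, ∑ i, ‖yt i - ys
          + s • ((1 / ((n : ℝ) * p i (l i ω))) •
                (gradient (fun y => fij i (l i ω) (xt i) y) (yt i)
                  - gradient (fun y => fij i (l i ω) (xr i) y) (yr i))
              + gradient (fun y => fi i (xr i) y) (yr i))
          - s • gradient (fun y => fi i xs y) ys‖ ^ 2 ∂μP) ≤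
      (1 - μx * s + 4 * s ^ 2 * Lyx ^ 2 / (n * pmin)) * ∑ i, ‖xt i - xs‖ ^ 2
        + (1 - μy * s + 4 * s ^ 2 * Lxy ^ 2 / (n * pmin)) * ∑ i, ‖yt i - ys‖ ^ 2
        - (2 * s - 8 * s ^ 2 * Lxx / (n * pmin)) *
            ∑ i, (fi i xs (yt i) - fi i (xt i) (yt i)
              - ⟪gradient (fun x => fi i x (yt i)) (xt i), xs - xt i⟫)
        - (2 * s - 8 * s ^ 2 * Lyy / (n * pmin)) *
            ∑ i, (-(fi i (xt i) ys) + fi i (xt i) (yt i)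
              + ⟪gradient (fun y => fi i (xt i) y) (yt i), ys - yt i⟫)
        + (4 * s ^ 2 * (Lxx ^ 2 + Lyx ^ 2) / (n * pmin)) * ∑ i, ‖xr i - xs‖ ^ 2
        + (4 * s ^ 2 * (Lyy ^ 2 + Lxy ^ 2) / (n * pmin)) * ∑ i, ‖yr i - ys‖ ^ 2 := by
  have hpmin_pos : 0 < pmin := by
    obtain ⟨i, j, rfl⟩ := hpmin.1
    exact hp i j
  have hle : ∀ i j, pmin ≤ p i j := fun i j => hpmin.2 ⟨i, j, rfl⟩
  have hx := fun i => integrable_and_integral_svrg_step_sq_le_of_convex (hlmeas i) (hllaw i)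
    (hdx i) (hconvx i) (hLxx i) (hLxy i) (hfi i) (hsc i) (hp1 i) hpmin_pos (hle i) xs (xt i) (xr i)
    ys (yt i) (yr i) hs.le
  have hy := fun i => integrable_and_integral_svrg_step_sq_le_of_concave (hlmeas i) (hllaw i)
    (hdy i) (hconcy i) (hLyy i) (hLyx i) (hfi i) (hscc i) (hp1 i) hpmin_pos (hle i) xs (xt i) (xr i)
    ys (yt i) (yr i) hs.le
  rw [integral_finsetSum _ fun i _ => (hx i).1, integral_finsetSum _ fun i _ => (hy i).1,
    ← sum_add_distrib]
  refine (sum_le_sum fun i _ => add_le_add (hx i).2 (hy i).2).trans_eq ?_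
  simp only [mul_sum, ← sum_add_distrib, ← sum_sub_distrib]
  refine sum_congr rfl fun i _ => ?_
  simp only [bregmanDiv, gradient_fun_neg, inner_neg_left]
  ring

/-- One-step SVRG-oracle bound (Lemma `exp_xkt_ykt_svrg`, finite-sum setting): with the
SVRG stochastic gradients built from independently sampled indices `l_i ~ (p_{ij})_j`,
the expected squared distances of the SVRG gradient steps are controlled by the current
iterates, the Bregman distances, and the reference points. -/
theorem one_step_svrg_oracle_bound {dx dy m n : ℕ} (hm : 0 < m) (hn : 0 < n)
    {Ω : Type*} [MeasurableSpace Ω] (μP : Measure Ω) [IsProbabilityMeasure μP]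
    (fij : Fin m → Fin n → EuclideanSpace ℝ (Fin dx) → EuclideanSpace ℝ (Fin dy) → ℝ)
    (hdx : ∀ i j y, Differentiable ℝ (fun x => fij i j x y))
    (hdy : ∀ i j x, Differentiable ℝ (fun y => fij i j x y))
    (hconvx : ∀ i j y, ConvexOn ℝ Set.univ (fun x => fij i j x y))
    (hconcy : ∀ i j x, ConcaveOn ℝ Set.univ (fun y => fij i j x y))
    (Lxx Lyy Lxy Lyx : ℝ)
    (hLxx : ∀ i j y x₁ x₂, ‖gradient (fun x => fij i j x y) x₁
        - gradient (fun x => fij i j x y) x₂‖ ≤ Lxx * ‖x₁ - x₂‖)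
    (hLyy : ∀ i j x y₁ y₂, ‖gradient (fun y => fij i j x y) y₁
        - gradient (fun y => fij i j x y) y₂‖ ≤ Lyy * ‖y₁ - y₂‖)
    (hLxy : ∀ i j x y₁ y₂, ‖gradient (fun x' => fij i j x' y₁) x
        - gradient (fun x' => fij i j x' y₂) x‖ ≤ Lxy * ‖y₁ - y₂‖)
    (hLyx : ∀ i j y x₁ x₂, ‖gradient (fun y' => fij i j x₁ y') y
        - gradient (fun y' => fij i j x₂ y') y‖ ≤ Lyx * ‖x₁ - x₂‖)
    (fi : Fin m → EuclideanSpace ℝ (Fin dx) → EuclideanSpace ℝ (Fin dy) → ℝ)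
    (hfi : ∀ i x y, fi i x y = (1 / (n : ℝ)) * ∑ j, fij i j x y)
    (μx μy : ℝ)
    (hsc : ∀ i y x₁ x₂, fi i x₂ y + ⟪gradient (fun x => fi i x y) x₂, x₁ - x₂⟫
        + μx / 2 * ‖x₁ - x₂‖ ^ 2 ≤ fi i x₁ y)
    (hscc : ∀ i x y₁ y₂, fi i x y₁ ≤ fi i x y₂ + ⟪gradient (fun y => fi i x y) y₂, y₁ - y₂⟫
        - μy / 2 * ‖y₁ - y₂‖ ^ 2)
    -- sampling probabilities
    (p : Fin m → Fin n → ℝ) (hp : ∀ i j, 0 < p i j) (hp1 : ∀ i, ∑ j, p i j = 1)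
    (pmin : ℝ) (hpmin : IsLeast {t : ℝ | ∃ i j, p i j = t} pmin)
    -- the fixed point `z⋆`, the iterates and the reference points
    (xs : EuclideanSpace ℝ (Fin dx)) (ys : EuclideanSpace ℝ (Fin dy))
    (xt xr : Fin m → EuclideanSpace ℝ (Fin dx)) (yt yr : Fin m → EuclideanSpace ℝ (Fin dy))
    -- the independently sampled indices
    (l : Fin m → Ω → Fin n) (hlmeas : ∀ i, Measurable (l i))
    (hlindep : ProbabilityTheory.iIndepFun l μP)
    (hllaw : ∀ i j, μP {ω | l i ω = j} = ENNReal.ofReal (p i j))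
    (s : ℝ) (hs : 0 < s) :
    (∫ ω, ∑ i, ‖xt i - xs
          - s • ((1 / ((n : ℝ) * p i (l i ω))) •
                (gradient (fun x => fij i (l i ω) x (yt i)) (xt i)
                  - gradient (fun x => fij i (l i ω) x (yr i)) (xr i))
              + gradient (fun x => fi i x (yr i)) (xr i))
          + s • gradient (fun x => fi i x ys) xs‖ ^ 2 ∂μP)
      + (∫ ω, ∑ i, ‖yt i - ys
          + s • ((1 / ((n : ℝ) * p i (l i ω))) •
                (gradient (fun y => fij i (l i ω) (xt i) y) (yt i)
                  - gradient (fun y => fij i (l i ω) (xr i) y) (yr i))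
              + gradient (fun y => fi i (xr i) y) (yr i))
          - s • gradient (fun y => fi i xs y) ys‖ ^ 2 ∂μP) ≤
      (1 - μx * s + 4 * s ^ 2 * Lyx ^ 2 / (n * pmin)) * ∑ i, ‖xt i - xs‖ ^ 2
        + (1 - μy * s + 4 * s ^ 2 * Lxy ^ 2 / (n * pmin)) * ∑ i, ‖yt i - ys‖ ^ 2
        - (2 * s - 8 * s ^ 2 * Lxx / (n * pmin)) *
            ∑ i, (fi i xs (yt i) - fi i (xt i) (yt i)
              - ⟪gradient (fun x => fi i x (yt i)) (xt i), xs - xt i⟫)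
        - (2 * s - 8 * s ^ 2 * Lyy / (n * pmin)) *
            ∑ i, (-(fi i (xt i) ys) + fi i (xt i) (yt i)
              + ⟪gradient (fun y => fi i (xt i) y) (yt i), ys - yt i⟫)
        + (4 * s ^ 2 * (Lxx ^ 2 + Lyx ^ 2) / (n * pmin)) * ∑ i, ‖xr i - xs‖ ^ 2
        + (4 * s ^ 2 * (Lyy ^ 2 + Lxy ^ 2) / (n * pmin)) * ∑ i, ‖yr i - ys‖ ^ 2 :=
  one_step_svrg_oracle_bound_general μP fij hdx hdy hconvx hconcy Lxx Lyy Lxy Lyx hLxx hLyy hLxy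
    hLyx fi hfi μx μy hsc hscc p hp hp1 pmin hpmin xs ys xt xr yt yr l hlmeas hllaw s hs
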